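/- arXiv:1409.0173 — 5 statements merged into one kernel-verified Lean document; each statement's English description precedes it below -/
import Mathlib

section
/- In the MBF analysis, with A = {v_{i_1},…,v_{i_k}} the MBF output listed in the order of selection, and with the sets Y_j, A_j*, and values c_j defined inductively from an optimal solution A* (Y_1 = A*; X_j = vertices of Y_j adjacent to v_{i_j}; A_j* = X_j if X_j ≠ ∅, else A_j* = {minimum-budget vertex of Y_j}; c_j = min budget in A_j*; Y_{j+1} = Y_j \ A_j*): for every j ≥ 1 with Y_j nonempty, b_{i_j} ≤ c_j. -/
/-- `S` is an independent set in `G`: no two vertices of `S` are adjacent. -/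
def SimpleGraph.IsIndepSet' {V : Type*} (G : SimpleGraph V) (S : Set V) : Prop :=
  ∀ u ∈ S, ∀ v ∈ S, ¬ G.Adj u v

attribute [local instance] Classical.propDecidable

/-- The greedy budgeted independent-set algorithm: process vertices in the given
order; stop as soon as the remaining budget is smaller than the budget of the
current vertex; otherwise select the current vertex if it is non-adjacent to all
previously selected vertices, spending its budget. Returns the selected vertices
in order of selection. (With the vertex list sorted in non-decreasing order of
budget this is the Minimum Budget First (MBF) algorithm.) -/
noncomputable def mbf {V : Type*} (G : SimpleGraph V) (b : V → ℕ) :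
    List V → List V → ℕ → List V
  | [], A, _ => A
  | v :: rest, A, rem =>
    if rem < b v then A
    else if ∀ u ∈ A, ¬ G.Adj v u then mbf G b rest (A ++ [v]) (rem - b v)
    else mbf G b rest A rem

/-!
MBF scans the vertices by non-decreasing budget. If some `u ∈ Y_j` were cheaper than
`v_{i_j}`, then `u`, which is not in `A` since `A ∩ A* = ∅`, was scanned before `v_{i_j}` while
budget remained, so it was rejected for being adjacent to an earlier pick `v_{i_l}`, `l < j`.
But then `u ∈ X_l = A_l*`, so `u ∉ Y_{l+1} ⊇ Y_j`. Hence `b_{i_j}` is at most the budget of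
every vertex of `Y_j ⊇ A_j*`, and in particular at most `c_j`.
-/

theorem List.Nodup.exists_lt_getElem_eq_of_pair_sublist {α : Type*} {l : List α} {a b : α}
    (hl : l.Nodup) (hab : [a, b].Sublist l) {j : ℕ} {hj : j < l.length} (hb : l[j] = b) :
    ∃ (i : ℕ) (hij : i < j), l[i]'(hij.trans hj) = a := by
  obtain ⟨r₁, r₂, rfl, ha, hb₂⟩ := List.cons_sublist_iff.mp hab
  have hjr : r₁.length ≤ j := by
    by_contra! hjr
    rw [List.getElem_append_left hjr] at hb
    exact List.disjoint_of_nodup_append hl (hb ▸ List.getElem_mem hjr)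
      (List.singleton_sublist.mp hb₂)
  obtain ⟨i, hi, rfl⟩ := List.getElem_of_mem ha
  exact ⟨i, hi.trans_le hjr, List.getElem_append_left hi⟩

theorem List.pair_sublist_finRange {n : ℕ} {u v : Fin n} (h : u < v) :
    [u, v].Sublist (List.finRange n) :=
  List.sublist_of_subperm_of_sortedLE (List.Nodup.subperm (by simp [h.ne]) (by simp))
    (List.sortedLE_iff_pairwise.mpr (by simp [h.le])) (List.sortedLT_finRange n).sortedLE

section
variable {V : Type*} (G : SimpleGraph V) (b : V → ℕ)

theorem exists_mbf_eq_append_sublist : ∀ (L A₀ : List V) (rem : ℕ),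
    ∃ S, mbf G b L A₀ rem = A₀ ++ S ∧ S.Sublist L
  | [], A₀, _ => ⟨[], by simp [mbf], List.Sublist.refl _⟩
  | x :: rest, A₀, rem => by
    unfold mbf
    split_ifs
    · exact ⟨[], by simp, List.nil_sublist _⟩
    · obtain ⟨S, hS, hsub⟩ := exists_mbf_eq_append_sublist rest (A₀ ++ [x]) (rem - b x)
      exact ⟨x :: S, by simp [hS], hsub.cons_cons x⟩
    · obtain ⟨S, hS, hsub⟩ := exists_mbf_eq_append_sublist rest A₀ rem
      exact ⟨S, hS, hsub.cons x⟩

theorem subset_mbf (L A₀ : List V) (rem : ℕ) : A₀ ⊆ mbf G b L A₀ rem := by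
  obtain ⟨S, hS, -⟩ := exists_mbf_eq_append_sublist G b L A₀ rem
  exact hS ▸ List.subset_append_left A₀ S

theorem nodup_mbf {L : List V} (hL : L.Nodup) (rem : ℕ) : (mbf G b L [] rem).Nodup := by
  obtain ⟨S, hS, hsub⟩ := exists_mbf_eq_append_sublist G b L [] rem
  exact hS ▸ hsub.nodup hL

theorem exists_adj_of_notMem_mbf {u v : V} :
    ∀ {L A₀ : List V} {rem : ℕ}, L.Nodup → [u, v].Sublist L → v ∉ A₀ →
      u ∉ mbf G b L A₀ rem → v ∈ mbf G b L A₀ rem →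
      ∃ w, G.Adj u w ∧ [w, v].Sublist (mbf G b L A₀ rem)
  | [], _, _, _, huv, _, _, _ => absurd huv (by simp)
  | x :: rest, A₀, rem, hL, huv, hvA₀, hu, hv => by
    have hx : x ∉ rest := (List.nodup_cons.mp hL).1
    unfold mbf at hu hv ⊢
    split_ifs at hu hv ⊢ with _ hfree
    · exact absurd hv hvA₀
    · rcases List.sublist_cons_iff.mp huv with huv | ⟨r, hr, -⟩
      · have hvx : v ≠ x := fun h => hx (h ▸ huv.subset (by simp))
        exact exists_adj_of_notMem_mbf hL.of_cons huv (by simp [hvA₀, hvx]) hu hv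
      · cases hr
        exact absurd (subset_mbf G b rest _ _ (by simp)) hu
    · rcases List.sublist_cons_iff.mp huv with huv | ⟨r, hr, -⟩
      · exact exists_adj_of_notMem_mbf hL.of_cons huv hvA₀ hu hv
      · cases hr
        obtain ⟨w, hw, hadj⟩ : ∃ w ∈ A₀, G.Adj u w := by simpa using hfree
        obtain ⟨S, hS, -⟩ := exists_mbf_eq_append_sublist G b rest A₀ rem
        rw [hS] at hv ⊢
        have hvS : v ∈ S := (List.mem_append.mp hv).resolve_left hvA₀
        exact ⟨w, hadj, List.Sublist.append (List.singleton_sublist.mpr hw)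
          (List.singleton_sublist.mpr hvS)⟩
end

theorem exists_adj_getElem_of_budget_lt {n : ℕ} {G : SimpleGraph (Fin n)} {b : Fin n → ℕ}
    (hmono : Monotone b) {B : ℕ} {A : List (Fin n)} (hA : A = mbf G b (List.finRange n) [] B)
    {u : Fin n} (hu : u ∉ A) {i : ℕ} (hi : i < A.length) (hlt : b u < b A[i]) :
    ∃ (i' : ℕ) (hi' : i' < i), G.Adj u A[i'] := by
  subst hA
  have huv : u < _ := lt_of_not_ge fun h => (hmono h).not_gt hlt
  obtain ⟨w, hadj, hw⟩ := exists_adj_of_notMem_mbf G b (List.nodup_finRange n)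
    (List.pair_sublist_finRange huv) List.not_mem_nil hu (List.getElem_mem hi)
  obtain ⟨i', hi', rfl⟩ :=
    (nodup_mbf G b (List.nodup_finRange n) B).exists_lt_getElem_eq_of_pair_sublist hw rfl
  exact ⟨i', hi', hadj⟩

theorem stmt_4_general {n : ℕ} (hn : 0 < n) (G : SimpleGraph (Fin n))
    (b : Fin n → ℕ) (hmono : Monotone b) (B : ℕ)
    (A : List (Fin n)) (hA : A = mbf G b (List.finRange n) [] B)
    (k : ℕ) (hk : k = A.length)
    (Astar : Finset (Fin n))
    (hdisj : ∀ v ∈ A, v ∉ Astar)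
    (Y Aj : ℕ → Finset (Fin n))
    (hY1 : Y 1 = Astar)
    (hYsucc : ∀ j, Y (j + 1) = Y j \ Aj j)
    (hAj : ∀ j, 1 ≤ j → j ≤ k → Y j ≠ ∅ →
      (((Y j).filter (fun u => G.Adj (A.getD (j - 1) ⟨0, hn⟩) u) ≠ ∅ ∧
        Aj j = (Y j).filter (fun u => G.Adj (A.getD (j - 1) ⟨0, hn⟩) u)) ∨
       ((Y j).filter (fun u => G.Adj (A.getD (j - 1) ⟨0, hn⟩) u) = ∅ ∧
        ∃ m ∈ Y j, (∀ u ∈ Y j, b m ≤ b u) ∧ Aj j = {m})))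
    (c : ℕ → ℕ)
    (hc : ∀ j, 1 ≤ j → j ≤ k → Y j ≠ ∅ →
      c j ∈ (Aj j).image b ∧ ∀ u ∈ Aj j, c j ≤ b u) :
    ∀ j, 1 ≤ j → j ≤ k → Y j ≠ ∅ → b (A.getD (j - 1) ⟨0, hn⟩) ≤ c j := by
  intro j hj1 hjk hYne
  have hYanti : Antitone Y := antitone_nat_of_succ_le fun i => hYsucc i ▸ Finset.sdiff_subset
  have hgetD (i : ℕ) (hi : i < A.length) : A.getD i ⟨0, hn⟩ = A[i] := List.getD_eq_getElem _ _ hi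
  have hAjY : Aj j ⊆ Y j := by
    rcases hAj j hj1 hjk hYne with ⟨-, h⟩ | ⟨-, m, hm, -, h⟩
    · exact h ▸ Finset.filter_subset _ _
    · exact h ▸ Finset.singleton_subset_iff.mpr hm
  have hle_of_mem : ∀ u ∈ Y j, b (A.getD (j - 1) ⟨0, hn⟩) ≤ b u := by
    intro u hu
    by_contra! hlt
    rw [hgetD _ (by omega)] at hlt
    obtain ⟨i, hi, hadj⟩ := exists_adj_getElem_of_budget_lt hmono hA
      (fun h => hdisj u h (hY1 ▸ hYanti hj1 hu)) _ hlt
    have huY : u ∈ Y (i + 1) := hYanti (by omega) hu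
    have huX : u ∈ (Y (i + 1)).filter (fun x => G.Adj (A.getD (i + 1 - 1) ⟨0, hn⟩) x) :=
      Finset.mem_filter.mpr ⟨huY, by rw [Nat.add_sub_cancel, hgetD i (by omega)]; exact hadj.symm⟩
    rcases hAj (i + 1) (by omega) (by omega) (Finset.ne_empty_of_mem huY) with ⟨-, hX⟩ | ⟨hX, -⟩
    · have huY' : u ∉ Y (i + 1 + 1) := by
        rw [hYsucc, Finset.mem_sdiff, not_and_not_right]
        exact fun _ => hX ▸ huX
      exact huY' (hYanti (by omega) hu)
    · exact Finset.notMem_empty u (hX ▸ huX)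
  obtain ⟨u, hu, hcu⟩ := Finset.mem_image.mp (hc j hj1 hjk hYne).1
  exact hcu ▸ hle_of_mem u (hAjY hu)

/-- MBF charging-argument lemma: let `A = [v_{i_1},…,v_{i_k}]` be the MBF output in
order of selection on a `(d+1)`-claw free graph, `A*` an optimum `B`-budgeted
independent set disjoint from `A`, and let `Y_j`, `A_j*`, `c_j` be defined
inductively (`Y_1 = A*`; `A_j*` is the set `X_j` of vertices of `Y_j` adjacent to
`v_{i_j}` if nonempty, else the singleton of a minimum-budget vertex of `Y_j`;
`c_j` is the minimum budget in `A_j*`; `Y_{j+1} = Y_j \ A_j*`). Then for every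
`j ≥ 1` with `Y_j` nonempty, `b_{i_j} ≤ c_j`. -/
theorem stmt_4 {n : ℕ} (hn : 0 < n) (G : SimpleGraph (Fin n)) (d : ℕ)
    (hfree : IsEmpty (completeBipartiteGraph (Fin 1) (Fin (d + 1)) ↪g G))
    (b : Fin n → ℕ) (hb : ∀ v, 0 < b v) (hmono : Monotone b) (B : ℕ)
    (A : List (Fin n)) (hA : A = mbf G b (List.finRange n) [] B)
    (k : ℕ) (hk : k = A.length)
    (Astar : Finset (Fin n)) (hind : G.IsIndepSet' ↑Astar)
    (hbud : ∑ v ∈ Astar, b v ≤ B)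
    (hopt : ∀ S : Finset (Fin n), G.IsIndepSet' ↑S → ∑ v ∈ S, b v ≤ B →
      S.card ≤ Astar.card)
    (hdisj : ∀ v ∈ A, v ∉ Astar)
    (Y Aj : ℕ → Finset (Fin n))
    (hY1 : Y 1 = Astar)
    (hYsucc : ∀ j, Y (j + 1) = Y j \ Aj j)
    (hAjEmpty : ∀ j, Y j = ∅ → Aj j = ∅)
    (hAj : ∀ j, 1 ≤ j → j ≤ k → Y j ≠ ∅ →
      (((Y j).filter (fun u => G.Adj (A.getD (j - 1) ⟨0, hn⟩) u) ≠ ∅ ∧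
        Aj j = (Y j).filter (fun u => G.Adj (A.getD (j - 1) ⟨0, hn⟩) u)) ∨
       ((Y j).filter (fun u => G.Adj (A.getD (j - 1) ⟨0, hn⟩) u) = ∅ ∧
        ∃ m ∈ Y j, (∀ u ∈ Y j, b m ≤ b u) ∧ Aj j = {m})))
    (c : ℕ → ℕ)
    (hc : ∀ j, 1 ≤ j → j ≤ k → Y j ≠ ∅ →
      c j ∈ (Aj j).image b ∧ ∀ u ∈ Aj j, c j ≤ b u) :
    ∀ j, 1 ≤ j → j ≤ k → Y j ≠ ∅ → b (A.getD (j - 1) ⟨0, hn⟩) ≤ c j :=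
  stmt_4_general hn G b hmono B A hA k hk Astar hdisj Y Aj hY1 hYsucc hAj c hc
end

section
/- There is a family of instances showing the d-approximation of MBF is tight: for the star K_{1,d} where the center has budget 1, each of the d leaves has budget 2, and B = 2d, the maximum B-budgeted independent set has cardinality d, while the MBF greedy algorithm (minimum budget first) selects only the center vertex, a solution of cardinality 1. -/
/-- `S` is an independent set in `G`: no two vertices of `S` are adjacent. -/
def SimpleGraph.IsIndepSetOrig {V : Type*} (G : SimpleGraph V) (S : Set V) : Prop :=
  ∀ u ∈ S, ∀ v ∈ S, ¬ G.Adj u v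

attribute [local instance] Classical.propDecidable

open Finset

namespace SimpleGraph

theorem IsIndepSetOrig.mono {V : Type*} {G : SimpleGraph V} {S T : Set V}
    (hT : G.IsIndepSetOrig T) (hST : S ⊆ T) : G.IsIndepSetOrig S :=
  fun u hu v hv => hT u (hST hu) v (hST hv)

theorem isIndepSetOrig_range_inr (V W : Type*) :
    (completeBipartiteGraph V W).IsIndepSetOrig (Set.range Sum.inr) := by
  rintro _ ⟨a, rfl⟩ _ ⟨b, rfl⟩
  simp

theorem IsIndepSetOrig.subset_range_inl_or_subset_range_inr {V W : Type*} {S : Set (V ⊕ W)}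
    (hS : (completeBipartiteGraph V W).IsIndepSetOrig S) :
    S ⊆ Set.range Sum.inl ∨ S ⊆ Set.range Sum.inr := by
  by_contra! h
  obtain ⟨u, huS, hu⟩ := Set.not_subset.1 h.1
  obtain ⟨v, hvS, hv⟩ := Set.not_subset.1 h.2
  obtain ⟨b, rfl⟩ : ∃ b, u = Sum.inr b := by cases u <;> simp_all
  obtain ⟨a, rfl⟩ : ∃ a, v = Sum.inl a := by cases v <;> simp_all
  exact hS _ huS _ hvS (by simp)

theorem IsIndepSetOrig.card_le_completeBipartiteGraph {V W : Type*} [Fintype V] [Fintype W]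
    {S : Finset (V ⊕ W)} (hS : (completeBipartiteGraph V W).IsIndepSetOrig ↑S) :
    #S ≤ Fintype.card V ∨ #S ≤ Fintype.card W := by
  rcases hS.subset_range_inl_or_subset_range_inr with h | h
  · left
    simpa using card_le_card (t := univ.map .inl) fun v hv => by obtain ⟨a, rfl⟩ := h hv; simp
  · right
    simpa using card_le_card (t := univ.map .inr) fun v hv => by obtain ⟨b, rfl⟩ := h hv; simp

end SimpleGraph

theorem mbf_eq_self_of_forall_exists_adj {V : Type*} (G : SimpleGraph V) (b : V → ℕ)
    (l A : List V) (rem : ℕ) (h : ∀ v ∈ l, ∃ u ∈ A, G.Adj v u) : mbf G b l A rem = A := by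
  induction l generalizing rem with
  | nil => rw [mbf]
  | cons v l ih =>
    obtain ⟨u, hu, hvu⟩ := h v List.mem_cons_self
    rw [mbf]
    split_ifs with hrem hfree
    · rfl
    · exact absurd hvu (hfree u hu)
    · exact ih rem fun w hw => h w (List.mem_cons_of_mem v hw)

/-- Tightness of the `d`-approximation of MBF: on the star `K_{1,d}` (`d ≥ 1`)
with center budget `1`, leaf budgets `2` and `B = 2d`, the maximum `B`-budgeted
independent set has cardinality `d`, while MBF (which processes the center first,
as it has minimum budget) returns only the center, a solution of cardinality 1. -/
theorem stmt_5 (d : ℕ) (hd : 1 ≤ d) :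
    IsGreatest {m : ℕ | ∃ S : Finset (Fin 1 ⊕ Fin d),
        (completeBipartiteGraph (Fin 1) (Fin d)).IsIndepSetOrig ↑S ∧
        ∑ v ∈ S, Sum.elim (fun _ => 1) (fun _ => 2) v ≤ 2 * d ∧ S.card = m} d ∧
    mbf (completeBipartiteGraph (Fin 1) (Fin d))
        (Sum.elim (fun _ => 1) (fun _ => 2))
        (Sum.inl 0 :: (List.finRange d).map Sum.inr) [] (2 * d)
      = [Sum.inl 0] := by
  refine ⟨⟨⟨univ.map .inr, ?_, by simp [mul_comm], by simp⟩, ?_⟩, ?_⟩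
  · exact (SimpleGraph.isIndepSetOrig_range_inr _ _).mono (by simp)
  · rintro m ⟨S, hS, -, rfl⟩
    have hcard := hS.card_le_completeBipartiteGraph
    simp only [Fintype.card_fin] at hcard
    omega
  · rw [mbf, if_neg (by simp; omega), if_pos (by simp)]
    exact mbf_eq_self_of_forall_exists_adj _ _ _ _ _ (by simp)
end

section
/- The Maximum Weight-Budget Ratio First heuristic has unbounded approximation ratio on (d+1)-claw free graphs: for every natural number M, consider K_{1,d} where the center has weight 1 and budget 1, each leaf has weight M/d and budget M, and B = dM. The greedy heuristic that picks the vertex of maximum weight-to-budget ratio first selects the center and returns weight 1, while the optimal B-budgeted independent set (all d leaves) has weight M. -/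
attribute [local instance] Classical.propDecidable

/-! The center of the star is selected first and then blocks every leaf, so the greedy run
returns the center alone, of weight `1`. The `d` leaves are independent and fit the budget
`B = dM` exactly, giving weight `M`; no independent set does better, since one containing the
center is the center alone, and one without it has at most `d` leaves of weight `M/d` each. -/

open Finset

lemma mbf_eq_of_forall_exists_adj {V : Type*} (G : SimpleGraph V) (b : V → ℕ) {A : List V}
    {rest : List V} (h : ∀ v ∈ rest, ∃ u ∈ A, G.Adj v u) (rem : ℕ) :
    mbf G b rest A rem = A := by
  induction rest generalizing rem with
  | nil => rw [mbf]
  | cons v rest ih =>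
    obtain ⟨u, hu, hvu⟩ := h v List.mem_cons_self
    have hblocked : ¬ ∀ u ∈ A, ¬ G.Adj v u := fun hA => hA u hu hvu
    rw [mbf, if_neg hblocked, ih (fun w hw => h w (List.mem_cons_of_mem v hw)), ite_self]

namespace SimpleGraph

lemma IsIndepSet'.toLeft_eq_empty_or_toRight_eq_empty {α β : Type*} {S : Finset (α ⊕ β)}
    (hS : (completeBipartiteGraph α β).IsIndepSet' ↑S) : S.toLeft = ∅ ∨ S.toRight = ∅ := by
  rw [← not_nonempty_iff_eq_empty, ← not_nonempty_iff_eq_empty, ← not_and_or]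
  rintro ⟨⟨a, ha⟩, b, hb⟩
  exact hS _ (mem_toLeft.1 ha) _ (mem_toRight.1 hb) (by simp)

lemma isIndepSet'_completeBipartiteGraph_disjSum_empty {α β : Type*} (t : Finset β) :
    (completeBipartiteGraph α β).IsIndepSet' ↑((∅ : Finset α).disjSum t) := by
  rintro (a | b) hu (a' | b') hv <;> simp_all

end SimpleGraph

lemma star_weight_le_of_isIndepSet' (d M : ℕ) (hM : 1 ≤ M) (S : Finset (Fin 1 ⊕ Fin d))
    (hS : (completeBipartiteGraph (Fin 1) (Fin d)).IsIndepSet' ↑S) :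
    ∑ v ∈ S, Sum.elim (fun _ => (1 : ℝ)) (fun _ => (M : ℝ) / d) v ≤ M := by
  rw [sum_sum_eq_sum_toLeft_add_sum_toRight]
  simp only [Sum.elim_inl, Sum.elim_inr, sum_const, nsmul_eq_mul, mul_one]
  have hL : (#S.toLeft : ℝ) ≤ 1 := by exact_mod_cast (card_le_univ S.toLeft).trans_eq (by simp)
  have hR : (#S.toRight : ℝ) ≤ d := by exact_mod_cast (card_le_univ S.toRight).trans_eq (by simp)
  have hMd : (d : ℝ) * (M / d) ≤ M := by
    rcases eq_or_ne d 0 with rfl | hd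
    · simp
    · rw [mul_div_cancel₀ _ (by exact_mod_cast hd)]
  rcases hS.toLeft_eq_empty_or_toRight_eq_empty with h | h <;> rw [h]
  · simp only [card_empty, CharP.cast_eq_zero, zero_add]
    exact (mul_le_mul_of_nonneg_right hR (by positivity)).trans hMd
  · simp only [card_empty, CharP.cast_eq_zero, zero_mul, add_zero]
    exact hL.trans (by exact_mod_cast hM)

/-- Unboundedness of the Maximum Weight-Budget Ratio First heuristic: on the star
`K_{1,d}` with center weight `1`, budget `1` and leaf weights `M/d`, budgets `M`,
with total budget `B = dM`, the greedy heuristic processing vertices in order of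
non-increasing weight-budget ratio (center first, ratio `1 ≥ 1/d`) selects only
the center, returning weight `1`, while the optimum `B`-budgeted independent set
has weight `M`. -/
theorem stmt_6 (d M : ℕ) (hd : 1 ≤ d) (hM : 1 ≤ M) :
    mbf (completeBipartiteGraph (Fin 1) (Fin d))
        (Sum.elim (fun _ => 1) (fun _ => M))
        (Sum.inl 0 :: (List.finRange d).map Sum.inr) [] (d * M)
      = [Sum.inl 0] ∧
    (∑ v ∈ (mbf (completeBipartiteGraph (Fin 1) (Fin d))
        (Sum.elim (fun _ => 1) (fun _ => M))
        (Sum.inl 0 :: (List.finRange d).map Sum.inr) [] (d * M)).toFinset,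
      Sum.elim (fun _ => (1 : ℝ)) (fun _ => (M : ℝ) / d) v) = 1 ∧
    IsGreatest {x : ℝ | ∃ S : Finset (Fin 1 ⊕ Fin d),
        (completeBipartiteGraph (Fin 1) (Fin d)).IsIndepSet' ↑S ∧
        ∑ v ∈ S, Sum.elim (fun _ => 1) (fun _ => M) v ≤ d * M ∧
        x = ∑ v ∈ S, Sum.elim (fun _ => (1 : ℝ)) (fun _ => (M : ℝ) / d) v}
      (M : ℝ) := by
  have hrun : mbf (completeBipartiteGraph (Fin 1) (Fin d))
      (Sum.elim (fun _ => 1) (fun _ => M))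
      (Sum.inl 0 :: (List.finRange d).map Sum.inr) [] (d * M) = [Sum.inl 0] := by
    have hbudget : ¬ d * M < 1 := Nat.not_lt.2 (Nat.mul_pos hd hM)
    rw [mbf, Sum.elim_inl, if_neg hbudget, if_pos (by simp)]
    exact mbf_eq_of_forall_exists_adj _ _ (by simp) _
  refine ⟨hrun, by simp [hrun], ⟨(∅ : Finset (Fin 1)).disjSum univ, ?_, ?_, ?_⟩, ?_⟩
  · exact SimpleGraph.isIndepSet'_completeBipartiteGraph_disjSum_empty _
  · simp
  · have hd0 : (d : ℝ) ≠ 0 := by positivity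
    simp [mul_div_cancel₀ _ hd0]
  · rintro x ⟨S, hS, -, rfl⟩
    exact star_weight_le_of_isIndepSet' d M hM S hS
end

section
/- MWBIS is NP-hard even on star trees: KNAPSACK reduces to MWBIS on K_{1,n}. Given a KNAPSACK instance with n objects of weights w_i, sizes s_i, and capacity B, construct K_{1,n} where leaf i has weight w_i and budget s_i, and the center has budget B+1 (any weight); then KNAPSACK has a solution of value at least k if and only if K_{1,n} has a B-budgeted independent set of weight at least k. -/
theorem SimpleGraph.isIndepSet'_image_inr_completeBipartiteGraph {α β : Type*} (t : Set β) :
    (completeBipartiteGraph α β).IsIndepSet' (Sum.inr '' t) := by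
  rintro _ ⟨_, -, rfl⟩ _ ⟨_, -, rfl⟩
  simp

theorem Finset.eq_map_inr_toRight_of_sum_elim_le {α β M : Type*} [AddCommMonoid M]
    [PartialOrder M] [IsOrderedAddMonoid M] [CanonicallyOrderedAdd M]
    {u : Finset (α ⊕ β)} {f : α → M} {g : β → M} {B : M}
    (hf : ∀ a, B < f a) (hu : ∑ v ∈ u, Sum.elim f g v ≤ B) :
    u = u.toRight.map .inr := by
  have hleft : u.toLeft = ∅ := by
    refine Finset.eq_empty_of_forall_notMem fun a ha => (hf a).not_ge ?_
    exact (Finset.single_le_sum (fun _ _ => zero_le) (Finset.mem_toLeft.mp ha)).trans hu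
  rw [← Finset.empty_disjSum, ← hleft, Finset.toLeft_disjSum_toRight]

theorem stmt_15_general (n : ℕ) (w : Fin n → ℝ)
    (s : Fin n → ℕ) (B : ℕ) (wc : ℝ) (k : ℝ) :
    (∃ T : Finset (Fin n), (∑ i ∈ T, s i) ≤ B ∧ k ≤ ∑ i ∈ T, w i) ↔
    (∃ S : Finset (Fin 1 ⊕ Fin n),
      (completeBipartiteGraph (Fin 1) (Fin n)).IsIndepSet' ↑S ∧
      (∑ v ∈ S, Sum.elim (fun _ => B + 1) s v) ≤ B ∧
      k ≤ ∑ v ∈ S, Sum.elim (fun _ => wc) w v) := by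
  constructor
  · rintro ⟨T, hsize, hweight⟩
    refine ⟨T.map .inr, ?_, by simpa using hsize, by simpa using hweight⟩
    rw [Finset.coe_map]
    exact SimpleGraph.isIndepSet'_image_inr_completeBipartiteGraph _
  · rintro ⟨S, -, hsize, hweight⟩
    have hS : S = S.toRight.map .inr :=
      Finset.eq_map_inr_toRight_of_sum_elim_le (fun _ => Nat.lt_succ_self B) hsize
    rw [hS] at hsize hweight
    exact ⟨S.toRight, by simpa using hsize, by simpa using hweight⟩

/-- KNAPSACK reduces to MWBIS on the star `K_{1,n}`: with leaf `i` carrying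
weight `w i` and budget `s i`, and the center carrying budget `B + 1` (and an
arbitrary weight `wc`), KNAPSACK has a solution of value at least `k` iff the
star has a `B`-budgeted independent set of weight at least `k`. -/
theorem stmt_15 (n : ℕ) (w : Fin n → ℝ) (hw : ∀ i, 0 ≤ w i)
    (s : Fin n → ℕ) (hs : ∀ i, 0 < s i) (B : ℕ) (wc : ℝ) (k : ℝ) :
    (∃ T : Finset (Fin n), (∑ i ∈ T, s i) ≤ B ∧ k ≤ ∑ i ∈ T, w i) ↔
    (∃ S : Finset (Fin 1 ⊕ Fin n),
      (completeBipartiteGraph (Fin 1) (Fin n)).IsIndepSet' ↑S ∧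
      (∑ v ∈ S, Sum.elim (fun _ => B + 1) s v) ≤ B ∧
      k ≤ ∑ v ∈ S, Sum.elim (fun _ => wc) w v) :=
  stmt_15_general n w s B wc k
end

section
/- In the MBF analysis on a (d+1)-claw free graph, if A = {v_{i_1},…,v_{i_k}} is the MBF output disjoint from an optimum A*, and the sets A_1*,…,A_k* are defined as in the charging argument (A_j* is the set of at most d vertices of Y_j adjacent to v_{i_j}, or the single minimum-budget vertex of Y_j if there are none), then A* \ (A_1* ∪ … ∪ A_k*) = ∅, i.e., the sets A_j* cover all of A*. -/
attribute [local instance] Classical.propDecidable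

/-!
Suppose a vertex `w` of `A*` is charged to no `v_{i_j}`. Then `w` stays in every `Yⱼ`, so it is
adjacent to no vertex chosen by MBF, and MBF can only have left it out for lack of budget:
`B < b(A) + b(w)`. On the other hand each `v_{i_j}` costs at most the cheapest vertex of `Yⱼ`,
since a cheaper vertex of `Yⱼ` would have been adjacent to an earlier choice and thus charged
already. The nonempty sets `Aⱼ*` are disjoint subsets of `A* \ {w}`, so
`b(A) + b(w) ≤ b(A*) ≤ B`.
-/

theorem List.sum_map_eq_sum_Icc_getD {α M : Type*} [AddCommMonoid M] (l : List α) (f : α → M)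
    (d : α) : (l.map f).sum = ∑ j ∈ Finset.Icc 1 l.length, f (l.getD (j - 1) d) := by
  rw [← List.ofFn_getElem_eq_map, List.sum_ofFn, ← Finset.Ico_add_one_right_eq_Icc,
    Finset.sum_Ico_eq_sum_range, ← Fin.sum_univ_eq_sum_range]
  simp

section Mbf

variable {V : Type*} (G : SimpleGraph V) (b : V → ℕ)

theorem prefix_mbf (L Acc : List V) (rem : ℕ) : Acc <+: mbf G b L Acc rem := by
  induction L generalizing Acc rem with
  | nil => exact List.prefix_refl Acc
  | cons v rest ih =>
    rw [mbf]
    split_ifs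
    · exact List.prefix_refl Acc
    · exact (List.prefix_append Acc [v]).trans (ih _ _)
    · exact ih _ _

theorem budget_lt_of_notMem_mbf {L : List V} (hL : L.Pairwise (b · ≤ b ·))
    (Acc : List V) (rem : ℕ) {w : V} (hwL : w ∈ L) (hw : w ∉ mbf G b L Acc rem)
    (hwadj : ∀ a ∈ mbf G b L Acc rem, ¬ G.Adj w a) :
    (Acc.map b).sum + rem < ((mbf G b L Acc rem).map b).sum + b w := by
  induction L generalizing Acc rem with
  | nil => simp at hwL
  | cons v rest ih =>
    rw [List.pairwise_cons] at hL
    rw [mbf] at hw hwadj ⊢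
    by_cases hstop : rem < b v
    · simp only [if_pos hstop] at hw ⊢
      rcases List.mem_cons.mp hwL with rfl | hwL
      · omega
      · have := hL.1 w hwL
        omega
    simp only [if_neg hstop] at hw hwadj ⊢
    have hwv : w ≠ v := by
      rintro rfl
      split_ifs at hw hwadj with hsel
      · exact hw ((prefix_mbf G b _ _ _).subset (by simp))
      · push Not at hsel
        obtain ⟨a, ha, hadj⟩ := hsel
        exact hwadj a ((prefix_mbf G b _ _ _).subset ha) hadj
    have hwrest := (List.mem_cons.mp hwL).resolve_left hwv
    split_ifs at hw hwadj ⊢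
    · have := ih hL.2 _ _ hwrest hw hwadj
      simp only [List.map_append, List.sum_append, List.map_singleton, List.sum_singleton] at this
      omega
    · exact ih hL.2 _ _ hwrest hw hwadj

/-- Had `u` come before the `j`-th selected vertex in `L`, MBF would have selected it. -/
theorem budget_le_of_notMem_mbf {L : List V} (hL : L.Pairwise (b · ≤ b ·))
    (Acc : List V) (rem : ℕ) {u : V} (huL : u ∈ L) (hu : u ∉ mbf G b L Acc rem)
    {j : ℕ} (hAccj : Acc.length ≤ j) (hj : j < (mbf G b L Acc rem).length)
    (huadj : ∀ a ∈ (mbf G b L Acc rem).take j, ¬ G.Adj u a) :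
    b (mbf G b L Acc rem)[j] ≤ b u := by
  induction L generalizing Acc rem with
  | nil => simp only [mbf] at hj; omega
  | cons v rest ih =>
    rw [List.pairwise_cons] at hL
    simp only [mbf] at hu hj huadj ⊢
    by_cases hstop : rem < b v
    · simp only [if_pos hstop] at hj; omega
    simp only [if_neg hstop] at hu hj huadj ⊢
    split_ifs at hu hj huadj ⊢ with hsel
    · have hv := prefix_mbf G b rest (Acc ++ [v]) (rem - b v)
      have huv : u ≠ v := fun h => hu (hv.subset (by simp [h]))
      have hurest := (List.mem_cons.mp huL).resolve_left huv
      rcases (Nat.lt_or_ge j (Acc ++ [v]).length) with hjv | hjv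
      · have hjAcc : j = Acc.length := by simp only [List.length_append, List.length_singleton] at hjv; omega
        subst hjAcc
        rw [← hv.getElem hjv]
        simpa using hL.1 u hurest
      · exact ih hL.2 _ _ hurest hu hjv hj huadj
    · push Not at hsel
      have huv : u ≠ v := by
        rintro rfl
        obtain ⟨a, ha, hadj⟩ := hsel
        have hpre := (prefix_mbf G b rest Acc rem).take (n := j)
        rw [List.take_of_length_le hAccj] at hpre
        exact huadj a (hpre.subset ha) hadj
      exact ih hL.2 _ _ ((List.mem_cons.mp huL).resolve_left huv) hu hAccj hj huadj

end Mbf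

section Charging

variable {V : Type*} (G : SimpleGraph V) (b : V → ℕ)

def IsChargeStep (v : V) (Yj Aj : Finset V) : Prop :=
  (Yj.filter (fun u => G.Adj v u) ≠ ∅ ∧ Aj = Yj.filter (fun u => G.Adj v u)) ∨
    (Yj.filter (fun u => G.Adj v u) = ∅ ∧ ∃ m ∈ Yj, (∀ u ∈ Yj, b m ≤ b u) ∧ Aj = {m})

variable {G b} {v : V} {Yj Aj : Finset V}

theorem IsChargeStep.subset (h : IsChargeStep G b v Yj Aj) : Aj ⊆ Yj := by
  rcases h with ⟨-, rfl⟩ | ⟨-, m, hm, -, rfl⟩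
  · exact Finset.filter_subset _ _
  · exact Finset.singleton_subset_iff.mpr hm

theorem IsChargeStep.nonempty (h : IsChargeStep G b v Yj Aj) : Aj.Nonempty := by
  rcases h with ⟨hX, rfl⟩ | ⟨-, m, -, -, rfl⟩
  · exact Finset.nonempty_iff_ne_empty.mpr hX
  · exact Finset.singleton_nonempty m

theorem IsChargeStep.mem_of_adj (h : IsChargeStep G b v Yj Aj) {u : V} (hu : u ∈ Yj)
    (hadj : G.Adj v u) : u ∈ Aj := by
  have huX : u ∈ Yj.filter (fun u => G.Adj v u) := Finset.mem_filter.mpr ⟨hu, hadj⟩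
  rcases h with ⟨-, rfl⟩ | ⟨hX, -⟩
  · exact huX
  · simp [hX] at huX

end Charging

namespace ChargingSequence

variable {V : Type*} [DecidableEq V] {Y Aj : ℕ → Finset V} (hYsucc : ∀ j, Y (j + 1) = Y j \ Aj j)
include hYsucc

theorem antitone : Antitone Y :=
  antitone_nat_of_succ_le fun j => (hYsucc j).symm ▸ Finset.sdiff_subset

theorem notMem_of_lt {i j : ℕ} (hij : i < j) {u : V} (hu : u ∈ Y j) : u ∉ Aj i := by
  have hu' : u ∈ Y (i + 1) := antitone hYsucc hij hu
  rw [hYsucc, Finset.mem_sdiff] at hu'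
  exact hu'.2

theorem pairwiseDisjoint {s : Set ℕ} (hsub : ∀ j ∈ s, Aj j ⊆ Y j) : s.PairwiseDisjoint Aj := by
  have key : ∀ i ∈ s, ∀ j ∈ s, i < j → Disjoint (Aj i) (Aj j) := fun i _ j hj hij =>
    Finset.disjoint_right.mpr fun _ hu => notMem_of_lt hYsucc hij (hsub j hj hu)
  intro i hi j hj hne
  rcases lt_or_gt_of_ne hne with hij | hji
  · exact key i hi j hj hij
  · exact (key j hj i hi hji).symm

theorem mem_of_notMem_biUnion {k : ℕ} {w : V} (hw : w ∈ Y 1)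
    (hwc : w ∉ (Finset.Icc 1 k).biUnion Aj) {j : ℕ} (hj1 : 1 ≤ j) (hjk : j ≤ k + 1) :
    w ∈ Y j := by
  induction j, hj1 using Nat.le_induction with
  | base => exact hw
  | succ j hj ih =>
    rw [hYsucc, Finset.mem_sdiff]
    exact ⟨ih (by omega), fun h => hwc (Finset.mem_biUnion.mpr ⟨j, Finset.mem_Icc.mpr ⟨hj, by omega⟩, h⟩)⟩

end ChargingSequence

section Cover

variable {V : Type*} [DecidableEq V] (G : SimpleGraph V) (b : V → ℕ) {L : List V}
  {B : ℕ} {A : List V} {Y Aj : ℕ → Finset V}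

open ChargingSequence

theorem budget_mbf_le_of_mem_charging (hL : L.Pairwise (b · ≤ b ·)) (hA : A = mbf G b L [] B)
    (hYsucc : ∀ j, Y (j + 1) = Y j \ Aj j) (hYL : ∀ v ∈ Y 1, v ∈ L)
    (hdisj : ∀ v ∈ A, v ∉ Y 1) (v₀ : V) {j : ℕ} (hj1 : 1 ≤ j) (hjk : j ≤ A.length)
    (hstep : ∀ i, 1 ≤ i → i < j → IsChargeStep G b (A.getD (i - 1) v₀) (Y i) (Aj i))
    {u : V} (hu : u ∈ Y j) : b (A.getD (j - 1) v₀) ≤ b u := by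
  subst hA
  have hu1 : u ∈ Y 1 := antitone hYsucc hj1 hu
  rw [List.getD_eq_getElem _ _ (by omega)]
  refine budget_le_of_notMem_mbf G b hL [] B (hYL u hu1) (fun h => hdisj u h hu1)
    (Nat.zero_le _) _ ?_
  intro a ha hadj
  obtain ⟨i, hi, rfl⟩ := List.mem_take_iff_getElem.mp ha
  have hi' : i < j - 1 := lt_of_lt_of_le hi (min_le_left _ _)
  have hstep_i := hstep (i + 1) (by omega) (by omega)
  rw [Nat.add_sub_cancel, List.getD_eq_getElem _ _ (by omega)] at hstep_i
  exact notMem_of_lt hYsucc (by omega : i + 1 < j) hu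
    (hstep_i.mem_of_adj (antitone hYsucc (by omega : i + 1 ≤ j) hu) hadj.symm)

theorem sum_mbf_le_sum_charged (hL : L.Pairwise (b · ≤ b ·)) (hA : A = mbf G b L [] B)
    (hYsucc : ∀ j, Y (j + 1) = Y j \ Aj j) (hYL : ∀ v ∈ Y 1, v ∈ L)
    (hdisj : ∀ v ∈ A, v ∉ Y 1) (v₀ : V)
    (hstep : ∀ j, 1 ≤ j → j ≤ A.length → IsChargeStep G b (A.getD (j - 1) v₀) (Y j) (Aj j)) :
    (A.map b).sum ≤ ∑ v ∈ (Finset.Icc 1 A.length).biUnion Aj, b v := by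
  rw [List.sum_map_eq_sum_Icc_getD A b v₀, Finset.sum_biUnion (pairwiseDisjoint hYsucc
    fun j hj => (hstep j (Finset.mem_Icc.mp hj).1 (Finset.mem_Icc.mp hj).2).subset)]
  refine Finset.sum_le_sum fun j hj => ?_
  obtain ⟨hj1, hjk⟩ := Finset.mem_Icc.mp hj
  obtain ⟨m, hm⟩ := (hstep j hj1 hjk).nonempty
  calc b (A.getD (j - 1) v₀)
      ≤ b m := budget_mbf_le_of_mem_charging G b hL hA hYsucc hYL hdisj v₀ hj1 hjk
        (fun i hi1 hij => hstep i hi1 (by omega)) ((hstep j hj1 hjk).subset hm)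
    _ ≤ ∑ v ∈ Aj j, b v := Finset.single_le_sum (fun _ _ => Nat.zero_le _) hm

theorem mbf_charging_cover (hL : L.Pairwise (b · ≤ b ·)) (hA : A = mbf G b L [] B)
    {Astar : Finset V} (hAstarL : ∀ v ∈ Astar, v ∈ L) (hbud : ∑ v ∈ Astar, b v ≤ B)
    (hdisj : ∀ v ∈ A, v ∉ Astar) (hY1 : Y 1 = Astar) (hYsucc : ∀ j, Y (j + 1) = Y j \ Aj j)
    (v₀ : V) (hstep : ∀ j, 1 ≤ j → j ≤ A.length → Y j ≠ ∅ →
      IsChargeStep G b (A.getD (j - 1) v₀) (Y j) (Aj j)) :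
    Astar \ (Finset.Icc 1 A.length).biUnion Aj = ∅ := by
  subst hY1
  rw [Finset.sdiff_eq_empty_iff_subset]
  intro w hw
  by_contra hwc
  have hwY : ∀ j, 1 ≤ j → j ≤ A.length + 1 → w ∈ Y j := fun j hj1 hjk =>
    mem_of_notMem_biUnion hYsucc hw hwc hj1 hjk
  have hstep' : ∀ j, 1 ≤ j → j ≤ A.length →
      IsChargeStep G b (A.getD (j - 1) v₀) (Y j) (Aj j) := fun j hj1 hjk =>
    hstep j hj1 hjk (Finset.ne_empty_of_mem (hwY j hj1 (by omega)))
  have hwA : ∀ a ∈ A, ¬ G.Adj w a := by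
    intro a ha hadj
    obtain ⟨i, hi, rfl⟩ := List.getElem_of_mem ha
    have hstep_i := hstep' (i + 1) (by omega) hi
    rw [Nat.add_sub_cancel, List.getD_eq_getElem _ _ hi] at hstep_i
    exact hwc (Finset.mem_biUnion.mpr ⟨i + 1, Finset.mem_Icc.mpr ⟨by omega, hi⟩,
      hstep_i.mem_of_adj (hwY _ (by omega) (by omega)) hadj.symm⟩)
  have hstop : B < (A.map b).sum + b w := by
    subst hA
    simpa using budget_lt_of_notMem_mbf G b hL [] B (hAstarL w hw)
      (fun h => hdisj w h hw) hwA
  have hcharged := sum_mbf_le_sum_charged G b hL hA hYsucc hAstarL hdisj v₀ hstep'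
  have hspent : b w + ∑ v ∈ (Finset.Icc 1 A.length).biUnion Aj, b v ≤ B := by
    rw [← Finset.sum_insert hwc]
    refine le_trans (Finset.sum_le_sum_of_subset (Finset.insert_subset hw ?_)) hbud
    exact Finset.biUnion_subset.mpr fun j hj =>
      (hstep' j (Finset.mem_Icc.mp hj).1 (Finset.mem_Icc.mp hj).2).subset.trans
        (antitone hYsucc (Finset.mem_Icc.mp hj).1)
  omega

end Cover

theorem stmt_18_general {n : ℕ} (hn : 0 < n) (G : SimpleGraph (Fin n))
    (b : Fin n → ℕ) (hmono : Monotone b) (B : ℕ)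
    (A : List (Fin n)) (hA : A = mbf G b (List.finRange n) [] B)
    (k : ℕ) (hk : k = A.length)
    (Astar : Finset (Fin n))
    (hbud : ∑ v ∈ Astar, b v ≤ B)
    (hdisj : ∀ v ∈ A, v ∉ Astar)
    (Y Aj : ℕ → Finset (Fin n))
    (hY1 : Y 1 = Astar)
    (hYsucc : ∀ j, Y (j + 1) = Y j \ Aj j)
    (hAj : ∀ j, 1 ≤ j → j ≤ k → Y j ≠ ∅ →
      (((Y j).filter (fun u => G.Adj (A.getD (j - 1) ⟨0, hn⟩) u) ≠ ∅ ∧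
        Aj j = (Y j).filter (fun u => G.Adj (A.getD (j - 1) ⟨0, hn⟩) u)) ∨
       ((Y j).filter (fun u => G.Adj (A.getD (j - 1) ⟨0, hn⟩) u) = ∅ ∧
        ∃ m ∈ Y j, (∀ u ∈ Y j, b m ≤ b u) ∧ Aj j = {m}))) :
    Astar \ (Finset.Icc 1 k).biUnion Aj = ∅ := by
  subst hk
  have hsorted : (List.finRange n).Pairwise (b · ≤ b ·) :=
    (List.pairwise_lt_finRange n).imp fun h => hmono h.le
  exact mbf_charging_cover G b hsorted hA (fun v _ => List.mem_finRange v) hbud hdisj hY1 hYsucc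
    ⟨0, hn⟩ hAj

/-- MBF covering lemma: with `A = [v_{i_1},…,v_{i_k}]` the MBF output on a
`(d+1)`-claw free graph, `A*` an optimum `B`-budgeted independent set disjoint
from `A`, and the charging sets defined inductively (`Y_1 = A*`;
`A_j* = X_j`, the vertices of `Y_j` adjacent to `v_{i_j}`, if nonempty, else the
singleton of a minimum-budget vertex of `Y_j`; `Y_{j+1} = Y_j \ A_j*`), the sets
`A_1*,…,A_k*` cover all of `A*`: `A* \ (A_1* ∪ … ∪ A_k*) = ∅`. -/
theorem stmt_18 {n : ℕ} (hn : 0 < n) (G : SimpleGraph (Fin n)) (d : ℕ)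
    (hfree : IsEmpty (completeBipartiteGraph (Fin 1) (Fin (d + 1)) ↪g G))
    (b : Fin n → ℕ) (hb : ∀ v, 0 < b v) (hmono : Monotone b) (B : ℕ)
    (A : List (Fin n)) (hA : A = mbf G b (List.finRange n) [] B)
    (k : ℕ) (hk : k = A.length)
    (Astar : Finset (Fin n)) (hind : G.IsIndepSet' ↑Astar)
    (hbud : ∑ v ∈ Astar, b v ≤ B)
    (hopt : ∀ S : Finset (Fin n), G.IsIndepSet' ↑S → ∑ v ∈ S, b v ≤ B →
      S.card ≤ Astar.card)
    (hdisj : ∀ v ∈ A, v ∉ Astar)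
    (Y Aj : ℕ → Finset (Fin n))
    (hY1 : Y 1 = Astar)
    (hYsucc : ∀ j, Y (j + 1) = Y j \ Aj j)
    (hAjEmpty : ∀ j, Y j = ∅ → Aj j = ∅)
    (hAj : ∀ j, 1 ≤ j → j ≤ k → Y j ≠ ∅ →
      (((Y j).filter (fun u => G.Adj (A.getD (j - 1) ⟨0, hn⟩) u) ≠ ∅ ∧
        Aj j = (Y j).filter (fun u => G.Adj (A.getD (j - 1) ⟨0, hn⟩) u)) ∨
       ((Y j).filter (fun u => G.Adj (A.getD (j - 1) ⟨0, hn⟩) u) = ∅ ∧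
        ∃ m ∈ Y j, (∀ u ∈ Y j, b m ≤ b u) ∧ Aj j = {m}))) :
    Astar \ (Finset.Icc 1 k).biUnion Aj = ∅ :=
  stmt_18_general hn G b hmono B A hA k hk Astar hbud hdisj Y Aj hY1 hYsucc hAj
end
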